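/- Suppose X, Y ⊂ [0,1] satisfy: (a) the Fourier decay bound |K_X(y)| ≤ C h^{β_F/2−δ}|y|^{−β_F/2} for all h ≤ |y| ≤ 2, with 0 < β_F ≤ δ; (b) vol(Y ∩ I) ≤ C h^{1−δ}|I|^δ for every interval I with h ≤ |I| ≤ 2; (c) sup|K_X| ≤ C h^{−δ}. Then ‖1_X F_h 1_Y‖_{L²→L²} ≤ C' h^{1/2 − δ + β_F/4} for a constant C' depending only on C, δ, β_F. -/

import Mathlib

open MeasureTheory

/-- The unitary semiclassical Fourier transform. -/
noncomputable def semiFT (h : ℝ) (f : ℝ → ℂ) (ξ : ℝ) : ℂ :=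
  (((2 * Real.pi * h) ^ (-(1/2) : ℝ) : ℝ) : ℂ) *
    ∫ x : ℝ, Complex.exp (-(Complex.I * (x : ℂ) * (ξ : ℂ)) / (h : ℂ)) * f x

/-- `K_X(y) = (2πh)^{-1} ∫_X e^{ixy/h} dx`, the rescaled Fourier transform of `1_X`. -/
noncomputable def Kx (h : ℝ) (X : Set ℝ) (y : ℝ) : ℂ :=
  (((2 * Real.pi * h)⁻¹ : ℝ) : ℂ) *
    ∫ x in X, Complex.exp (Complex.I * (x : ℂ) * (y : ℂ) / (h : ℂ))

/-!
`‖1_X F_h g‖²` is the quadratic form `∫∫ K_X(y - x) g(x) conj (g(y))` of `g = 1_Y f`, so by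
Schur's test it is at most `sup_{z ∈ Y} ∫_Y |K_X(w - z)| dw · ‖g‖²`. Around `z`, the ball of
radius `h` contributes `≤ C h^{-δ} · vol(Y ∩ B(z, h)) ≲ C² h^{1-δ} ≤ C² h^{1-2δ+β_F/2}`, and
on the dyadic shell `2^j h ≤ |w - z| < 2^{j+1} h` the decay of `K_X` and the regularity of `Y`
give `≲ C² h^{1-2δ+β_F/2} (2^j h)^{δ-β_F/2}`. As `δ > β_F/2` these form a geometric series,
dominated by its last term, where `2^j h ≈ 1`; hence `∫_Y |K_X(w - z)| dw ≲ C² h^{1-2δ+β_F/2}`.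
-/

open Complex Set Metric
open scoped ComplexConjugate

section Schur

lemma norm_mul_norm_le_of_support_subset {α : Type*} {Y : Set α} {g : α → ℂ}
    (hgY : ∀ x ∉ Y, g x = 0) (x y : α) :
    ‖g x‖ * ‖g y‖ ≤
      (‖g x‖ ^ 2 * Y.indicator (1 : α → ℝ) y + Y.indicator (1 : α → ℝ) x * ‖g y‖ ^ 2) / 2 := by
  by_cases hx : x ∈ Y <;> by_cases hy : y ∈ Y <;>
    simp [hx, hy, hgY]; nlinarith [sq_nonneg (‖g x‖ - ‖g y‖), norm_nonneg (g x)]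

variable {α : Type*} [MeasurableSpace α] {μ : Measure α} [SFinite μ]

lemma integral_norm_kernel_mul_sq_le {k : α × α → ℂ} {g : α → ℂ} {Y : Set α} {B M : ℝ}
    (hk : AEStronglyMeasurable k (μ.prod μ)) (hkB : ∀ p, ‖k p‖ ≤ B)
    (hY : MeasurableSet Y) (hYμ : μ Y ≠ ⊤) (hg : MemLp g 2 μ) (hgY : ∀ x ∉ Y, g x = 0)
    (hrow : ∀ x ∈ Y, ∫ y in Y, ‖k (x, y)‖ ∂μ ≤ M) :
    ∫ p, ‖k p‖ * (‖g p.1‖ ^ 2 * Y.indicator (1 : α → ℝ) p.2) ∂μ.prod μ ≤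
      M * ∫ x, ‖g x‖ ^ 2 ∂μ := by
  have hg2 : Integrable (fun x => ‖g x‖ ^ 2) μ := hg.integrable_norm_pow two_ne_zero
  have hint : Integrable (fun p => ‖k p‖ * (‖g p.1‖ ^ 2 * Y.indicator (1 : α → ℝ) p.2))
      (μ.prod μ) :=
    (hg2.mul_prod ((integrable_indicator_iff hY).2 (integrableOn_const (C := (1 : ℝ)) hYμ))).bdd_mul
      hk.norm (.of_forall fun p => by simpa using hkB p)
  have hinner (x : α) : ∫ y, ‖k (x, y)‖ * (‖g x‖ ^ 2 * Y.indicator (1 : α → ℝ) y) ∂μ =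
      ‖g x‖ ^ 2 * ∫ y in Y, ‖k (x, y)‖ ∂μ := by
    rw [← integral_indicator hY, ← integral_const_mul]
    congr 1 with y
    by_cases hy : y ∈ Y <;> simp [hy, mul_comm]
  rw [integral_prod _ hint, ← integral_const_mul]
  refine integral_mono hint.integral_prod_left (hg2.const_mul M) fun x => ?_
  dsimp only
  rw [hinner]
  by_cases hx : x ∈ Y
  · nlinarith [hrow x hx, sq_nonneg ‖g x‖]
  · simp [hgY x hx]

-- Schur's test.
lemma norm_integral_kernel_mul_le {k : α × α → ℂ} {g : α → ℂ} {Y : Set α} {B M : ℝ}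
    (hk : AEStronglyMeasurable k (μ.prod μ)) (hkB : ∀ p, ‖k p‖ ≤ B)
    (hY : MeasurableSet Y) (hYμ : μ Y ≠ ⊤) (hg : MemLp g 2 μ) (hgY : ∀ x ∉ Y, g x = 0)
    (hrow : ∀ x ∈ Y, ∫ y in Y, ‖k (x, y)‖ ∂μ ≤ M)
    (hcol : ∀ y ∈ Y, ∫ x in Y, ‖k (x, y)‖ ∂μ ≤ M) :
    ‖∫ p, k p * (g p.1 * conj (g p.2)) ∂μ.prod μ‖ ≤ M * ∫ x, ‖g x‖ ^ 2 ∂μ := by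
  have hg2 : Integrable (fun x => ‖g x‖ ^ 2) μ := hg.integrable_norm_pow two_ne_zero
  have hY1 : Integrable (Y.indicator (1 : α → ℝ)) μ :=
    (integrable_indicator_iff hY).2 (integrableOn_const (C := (1 : ℝ)) hYμ)
  have hrow' := integral_norm_kernel_mul_sq_le hk hkB hY hYμ hg hgY hrow
  have hcol' : ∫ p, ‖k p‖ * (Y.indicator (1 : α → ℝ) p.1 * ‖g p.2‖ ^ 2) ∂μ.prod μ ≤
      M * ∫ x, ‖g x‖ ^ 2 ∂μ := by
    rw [← integral_prod_swap]
    simpa only [Prod.fst_swap, Prod.snd_swap, mul_comm (Y.indicator _ _)] using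
      integral_norm_kernel_mul_sq_le (k := fun p => k p.swap) hk.prod_swap (fun p => hkB _) hY hYμ
        hg hgY hcol
  have hint₁ : Integrable (fun p => ‖k p‖ * (‖g p.1‖ ^ 2 * Y.indicator (1 : α → ℝ) p.2))
      (μ.prod μ) :=
    (hg2.mul_prod hY1).bdd_mul hk.norm (.of_forall fun p => by simpa using hkB p)
  have hint₂ : Integrable (fun p => ‖k p‖ * (Y.indicator (1 : α → ℝ) p.1 * ‖g p.2‖ ^ 2))
      (μ.prod μ) :=
    (hY1.mul_prod hg2).bdd_mul hk.norm (.of_forall fun p => by simpa using hkB p)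
  calc ‖∫ p, k p * (g p.1 * conj (g p.2)) ∂μ.prod μ‖
      ≤ ∫ p, (‖k p‖ * (‖g p.1‖ ^ 2 * Y.indicator (1 : α → ℝ) p.2) +
          ‖k p‖ * (Y.indicator (1 : α → ℝ) p.1 * ‖g p.2‖ ^ 2)) / 2 ∂μ.prod μ := by
        refine (norm_integral_le_integral_norm _).trans (integral_mono_of_nonneg
          (.of_forall fun _ => norm_nonneg _) ((hint₁.add hint₂).div_const 2)
          (.of_forall fun p => ?_))
        dsimp only
        rw [norm_mul, norm_mul, RCLike.norm_conj, ← mul_add, mul_div_assoc]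
        exact mul_le_mul_of_nonneg_left (norm_mul_norm_le_of_support_subset hgY p.1 p.2)
          (norm_nonneg _)
    _ = ((∫ p, ‖k p‖ * (‖g p.1‖ ^ 2 * Y.indicator (1 : α → ℝ) p.2) ∂μ.prod μ) +
          ∫ p, ‖k p‖ * (Y.indicator (1 : α → ℝ) p.1 * ‖g p.2‖ ^ 2) ∂μ.prod μ) / 2 := by
        rw [integral_div, integral_add hint₁ hint₂]
    _ ≤ M * ∫ x, ‖g x‖ ^ 2 ∂μ := by linarith

end Schur

lemma lpNorm_two_eq_sqrt {α E : Type*} [MeasurableSpace α] [NormedAddCommGroup E] {μ : Measure α}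
    {f : α → E} (hf : AEStronglyMeasurable f μ) :
    lpNorm f 2 μ = √(∫ x, ‖f x‖ ^ 2 ∂μ) := by
  rw [← ENNReal.coe_ofNat, lpNorm_nnreal_eq_integral_norm_rpow two_ne_zero hf, Real.sqrt_eq_rpow]
  norm_num

lemma eLpNorm_two_le_of_integral_sq_le {α β E F : Type*} [MeasurableSpace α] [MeasurableSpace β]
    [NormedAddCommGroup E] [NormedAddCommGroup F] {μ : Measure α} {ν : Measure β}
    {u : α → E} {g : β → F} {M : ℝ} (hu : MemLp u 2 μ) (hg : MemLp g 2 ν)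
    (hug : ∫ x, ‖u x‖ ^ 2 ∂μ ≤ M * ∫ y, ‖g y‖ ^ 2 ∂ν) :
    eLpNorm u 2 μ ≤ ENNReal.ofReal √M * eLpNorm g 2 ν := by
  rw [← ofReal_lpNorm hu, ← ofReal_lpNorm hg, ← ENNReal.ofReal_mul (Real.sqrt_nonneg _),
    lpNorm_two_eq_sqrt hu.1, lpNorm_two_eq_sqrt hg.1, ← Real.sqrt_mul']
  · exact ENNReal.ofReal_le_ofReal (Real.sqrt_le_sqrt hug)
  · exact integral_nonneg fun _ => by positivity

lemma sum_range_two_pow_mul_rpow_le {e t : ℝ} (he : 0 < e) (ht : 0 ≤ t) (N : ℕ) :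
    ∑ j ∈ Finset.range N, ((2 : ℝ) ^ j * t) ^ e ≤ ((2 : ℝ) ^ N * t) ^ e / (2 ^ e - 1) := by
  have hq : 1 < (2 : ℝ) ^ e := Real.one_lt_rpow one_lt_two he
  have hpow (j : ℕ) : ((2 : ℝ) ^ j * t) ^ e = t ^ e * ((2 : ℝ) ^ e) ^ j := by
    rw [Real.mul_rpow (by positivity) ht, ← Real.rpow_natCast, ← Real.rpow_natCast,
      ← Real.rpow_mul zero_le_two, ← Real.rpow_mul zero_le_two, mul_comm, mul_comm e]
  simp_rw [hpow, ← Finset.mul_sum, geom_sum_eq hq.ne', mul_div_assoc]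
  gcongr
  linarith

section Dyadic

variable {C δ h : ℝ} {Y : Set ℝ}

lemma measureReal_inter_ball_le (hC : 0 ≤ C) (hδ : 0 ≤ δ) (hh : 0 < h) (h1 : h ≤ 1)
    (hYb : Y ⊆ Icc 0 1)
    (hreg : ∀ a b : ℝ, a < b → h ≤ b - a → b - a ≤ 2 →
      (volume (Y ∩ Icc a b)).toReal ≤ C * h ^ (1 - δ) * (b - a) ^ δ)
    {z ρ : ℝ} (hz : z ∈ Icc 0 1) (hρ : h ≤ ρ) :
    volume.real (Y ∩ ball z ρ) ≤ C * h ^ (1 - δ) * (2 * ρ) ^ δ := by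
  set s := min ρ 1
  have hs : h ≤ s := le_min hρ h1
  have hsub : Y ∩ ball z ρ ⊆ Y ∩ Icc (z - s) (z + s) := by
    rintro w ⟨hwY, hw⟩
    have hwz : |w - z| ≤ s := le_min (mem_ball.1 hw).le (abs_sub_le_of_nonneg_of_le
      (hYb hwY).1 (hYb hwY).2 hz.1 hz.2)
    exact ⟨hwY, by linarith [(abs_le.1 hwz).1], by linarith [(abs_le.1 hwz).2]⟩
  calc volume.real (Y ∩ ball z ρ) ≤ volume.real (Y ∩ Icc (z - s) (z + s)) :=
        measureReal_mono hsub (measure_inter_lt_top_of_right_ne_top measure_Icc_lt_top.ne).ne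
    _ ≤ C * h ^ (1 - δ) * (z + s - (z - s)) ^ δ :=
        hreg _ _ (by linarith) (by linarith) (by linarith [min_le_right ρ 1])
    _ ≤ C * h ^ (1 - δ) * (2 * ρ) ^ δ := by
        gcongr
        · linarith
        · linarith [min_le_left ρ 1]

variable {βF : ℝ} {κ : ℝ → ℂ}

lemma setIntegral_norm_comp_sub_inter_ball_le (hC : 0 ≤ C) (hδ : 0 ≤ δ) (hh : 0 < h)
    (h1 : h ≤ 1) (hYb : Y ⊆ Icc 0 1)
    (hreg : ∀ a b : ℝ, a < b → h ≤ b - a → b - a ≤ 2 →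
      (volume (Y ∩ Icc a b)).toReal ≤ C * h ^ (1 - δ) * (b - a) ^ δ)
    (hsup : ∀ y, ‖κ y‖ ≤ C * h ^ (-δ))
    {z : ℝ} (hz : z ∈ Icc 0 1) :
    ∫ w in Y ∩ ball z h, ‖κ (w - z)‖ ≤ 2 ^ δ * C ^ 2 * h ^ (1 - δ) := by
  calc ∫ w in Y ∩ ball z h, ‖κ (w - z)‖
      ≤ C * h ^ (-δ) * volume.real (Y ∩ ball z h) :=
        (Real.le_norm_self _).trans <| norm_setIntegral_le_of_norm_le_const
          (measure_inter_lt_top_of_right_ne_top measure_ball_lt_top.ne)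
          fun w _ => by simpa using hsup (w - z)
    _ ≤ C * h ^ (-δ) * (C * h ^ (1 - δ) * (2 * h) ^ δ) := by
        gcongr
        exact measureReal_inter_ball_le hC hδ hh h1 hYb hreg hz le_rfl
    _ = 2 ^ δ * C ^ 2 * h ^ (1 - δ) := by
        rw [Real.mul_rpow zero_le_two hh.le, Real.rpow_neg hh.le]
        field_simp [(Real.rpow_pos_of_pos hh δ).ne']

lemma setIntegral_norm_comp_sub_inter_annulus_le (hC : 0 ≤ C) (hδ : 0 ≤ δ) (hβ : 0 ≤ βF)
    (hh : 0 < h) (h1 : h ≤ 1) (hYb : Y ⊆ Icc 0 1)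
    (hreg : ∀ a b : ℝ, a < b → h ≤ b - a → b - a ≤ 2 →
      (volume (Y ∩ Icc a b)).toReal ≤ C * h ^ (1 - δ) * (b - a) ^ δ)
    (hdecay : ∀ y : ℝ, h ≤ |y| → |y| ≤ 2 → ‖κ y‖ ≤ C * h ^ (βF / 2 - δ) * |y| ^ (-(βF / 2)))
    {z ρ : ℝ} (hz : z ∈ Icc 0 1) (hρ : h ≤ ρ) :
    ∫ w in Y ∩ (ball z (2 * ρ) \ ball z ρ), ‖κ (w - z)‖ ≤
      4 ^ δ * C ^ 2 * h ^ (1 - 2 * δ + βF / 2) * ρ ^ (δ - βF / 2) := by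
  have hρ0 : 0 < ρ := hh.trans_le hρ
  have hpt : ∀ w ∈ Y ∩ (ball z (2 * ρ) \ ball z ρ),
      ‖‖κ (w - z)‖‖ ≤ C * h ^ (βF / 2 - δ) * ρ ^ (-(βF / 2)) := by
    rintro w ⟨hwY, -, hw⟩
    rw [mem_ball, Real.dist_eq, not_lt] at hw
    have hw1 : |w - z| ≤ 1 := abs_sub_le_of_nonneg_of_le (hYb hwY).1 (hYb hwY).2 hz.1 hz.2
    rw [norm_norm]
    refine (hdecay (w - z) (hρ.trans hw) (by linarith)).trans ?_
    exact mul_le_mul_of_nonneg_left (Real.rpow_le_rpow_of_nonpos hρ0 hw (by linarith))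
      (by positivity)
  calc ∫ w in Y ∩ (ball z (2 * ρ) \ ball z ρ), ‖κ (w - z)‖
      ≤ C * h ^ (βF / 2 - δ) * ρ ^ (-(βF / 2)) * volume.real (Y ∩ (ball z (2 * ρ) \ ball z ρ)) :=
        (Real.le_norm_self _).trans <| norm_setIntegral_le_of_norm_le_const
          (measure_inter_lt_top_of_right_ne_top
            ((measure_mono sdiff_subset).trans_lt measure_ball_lt_top).ne) hpt
    _ ≤ C * h ^ (βF / 2 - δ) * ρ ^ (-(βF / 2)) * volume.real (Y ∩ ball z (2 * ρ)) := by
        gcongr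
        · exact (measure_inter_lt_top_of_right_ne_top measure_ball_lt_top.ne).ne
        · exact sdiff_subset
    _ ≤ C * h ^ (βF / 2 - δ) * ρ ^ (-(βF / 2)) * (C * h ^ (1 - δ) * (2 * (2 * ρ)) ^ δ) := by
        gcongr
        exact measureReal_inter_ball_le hC hδ hh h1 hYb hreg hz (by linarith)
    _ = 4 ^ δ * C ^ 2 * h ^ (1 - 2 * δ + βF / 2) * ρ ^ (δ - βF / 2) := by
        rw [show 2 * (2 * ρ) = 4 * ρ by ring, Real.mul_rpow (by norm_num) hρ0.le,
          show 1 - 2 * δ + βF / 2 = (βF / 2 - δ) + (1 - δ) by ring, Real.rpow_add hh,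
          show δ - βF / 2 = -(βF / 2) + δ by ring, Real.rpow_add hρ0]
        ring

lemma setIntegral_norm_comp_sub_le (hC : 0 ≤ C) (hδ : 0 < δ) (hβ : 0 ≤ βF) (hβδ : βF < 2 * δ)
    (hh : 0 < h) (h1 : h ≤ 1) (hκ : StronglyMeasurable κ) (hY : MeasurableSet Y)
    (hYb : Y ⊆ Icc 0 1)
    (hreg : ∀ a b : ℝ, a < b → h ≤ b - a → b - a ≤ 2 →
      (volume (Y ∩ Icc a b)).toReal ≤ C * h ^ (1 - δ) * (b - a) ^ δ)
    (hdecay : ∀ y : ℝ, h ≤ |y| → |y| ≤ 2 → ‖κ y‖ ≤ C * h ^ (βF / 2 - δ) * |y| ^ (-(βF / 2)))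
    (hsup : ∀ y, ‖κ y‖ ≤ C * h ^ (-δ)) {z : ℝ} (hz : z ∈ Icc 0 1) :
    ∫ w in Y, ‖κ (w - z)‖ ≤
      (2 ^ δ + 4 ^ δ * 2 ^ (δ - βF / 2) / (2 ^ (δ - βF / 2) - 1)) * C ^ 2 *
        h ^ (1 - 2 * δ + βF / 2) := by
  have he : 0 < δ - βF / 2 := by linarith
  set e := δ - βF / 2
  set E := 1 - 2 * δ + βF / 2
  obtain ⟨n, hn₁, hn₂⟩ := exists_nat_pow_near (one_le_one_div hh h1) one_lt_two
  rw [le_div_iff₀ hh] at hn₁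
  rw [div_lt_iff₀ hh] at hn₂
  set I : ℕ → ℝ := fun j => ∫ w in Y ∩ ball z (2 ^ j * h), ‖κ (w - z)‖
  have hint : IntegrableOn (fun w => ‖κ (w - z)‖) Y :=
    Measure.integrableOn_of_bounded (M := C * h ^ (-δ))
      ((measure_mono hYb).trans_lt measure_Icc_lt_top).ne
      (hκ.comp_measurable (measurable_id.sub_const z)).norm.aestronglyMeasurable
      (.of_forall fun w => by simpa using hsup (w - z))
  have hYn : Y ∩ ball z (2 ^ (n + 1) * h) = Y := by
    refine inter_eq_left.2 fun w hw => mem_ball.2 ?_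
    rw [Real.dist_eq]
    linarith [hn₂, abs_sub_le_of_nonneg_of_le (hYb hw).1 (hYb hw).2 hz.1 hz.2]
  have hstep (j : ℕ) : I (j + 1) - I j ≤ 4 ^ δ * C ^ 2 * h ^ E * (2 ^ j * h) ^ e := by
    have hsub : Y ∩ ball z (2 ^ j * h) ⊆ Y ∩ ball z (2 ^ (j + 1) * h) :=
      inter_subset_inter_right _ (ball_subset_ball (by gcongr <;> norm_num))
    simp only [I]
    rw [← setIntegral_sdiff (hY.inter measurableSet_ball) (hint.mono_set inter_subset_left) hsub,
      ← inter_sdiff_distrib_left, pow_succ, mul_comm _ (2 : ℝ), mul_assoc]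
    exact setIntegral_norm_comp_sub_inter_annulus_le hC hδ.le hβ hh h1 hYb hreg hdecay hz
      (le_mul_of_one_le_left hh.le (one_le_pow₀ one_le_two))
  have hnear : I 0 ≤ 2 ^ δ * C ^ 2 * h ^ E := by
    simp only [I, pow_zero, one_mul]
    refine (setIntegral_norm_comp_sub_inter_ball_le hC hδ.le hh h1 hYb hreg hsup hz).trans ?_
    exact mul_le_mul_of_nonneg_left (Real.rpow_le_rpow_of_exponent_ge hh h1 (by linarith))
      (by positivity)
  have hgeom : ∑ j ∈ Finset.range (n + 1), (2 ^ j * h) ^ e ≤ 2 ^ e / (2 ^ e - 1) :=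
    (sum_range_two_pow_mul_rpow_le he hh.le _).trans <| by
      gcongr
      · linarith [Real.one_lt_rpow one_lt_two he]
      · rw [pow_succ]; linarith
  calc ∫ w in Y, ‖κ (w - z)‖ = I 0 + ∑ j ∈ Finset.range (n + 1), (I (j + 1) - I j) := by
        rw [Finset.sum_range_sub, add_sub_cancel, ← hYn]
    _ ≤ 2 ^ δ * C ^ 2 * h ^ E +
          ∑ j ∈ Finset.range (n + 1), 4 ^ δ * C ^ 2 * h ^ E * (2 ^ j * h) ^ e :=
        add_le_add hnear (Finset.sum_le_sum fun j _ => hstep j)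
    _ ≤ 2 ^ δ * C ^ 2 * h ^ E + 4 ^ δ * C ^ 2 * h ^ E * (2 ^ e / (2 ^ e - 1)) := by
        rw [← Finset.mul_sum]
        gcongr
    _ = (2 ^ δ + 4 ^ δ * 2 ^ e / (2 ^ e - 1)) * C ^ 2 * h ^ E := by ring

end Dyadic

lemma norm_exp_I_mul_mul_div (a b h : ℝ) : ‖exp (I * a * b / h)‖ = 1 := by
  rw [norm_exp]; simp [div_re]

lemma norm_exp_neg_I_mul_mul_div (a b h : ℝ) : ‖exp (-(I * a * b) / h)‖ = 1 := by
  rw [neg_div, norm_exp, neg_re]; simp [div_re]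

lemma continuous_semiFT (h : ℝ) {g : ℝ → ℂ} (hg : Integrable g) : Continuous (semiFT h g) := by
  refine continuous_const.mul (continuous_of_dominated (bound := fun x => ‖g x‖)
    (fun ξ => ?_) (fun ξ => .of_forall fun x => ?_) hg.norm (.of_forall fun x => ?_))
  · exact (Continuous.aestronglyMeasurable (by fun_prop)).mul hg.aestronglyMeasurable
  · rw [norm_mul, norm_exp_neg_I_mul_mul_div, one_mul]
  · fun_prop

lemma norm_semiFT_le {h : ℝ} (hh : 0 ≤ h) (g : ℝ → ℂ) (ξ : ℝ) :
    ‖semiFT h g ξ‖ ≤ (2 * Real.pi * h) ^ (-(1/2) : ℝ) * ∫ x, ‖g x‖ := by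
  rw [semiFT, norm_mul, norm_real, Real.norm_of_nonneg (by positivity)]
  gcongr
  refine (norm_integral_le_integral_norm _).trans_eq ?_
  simp_rw [norm_mul, norm_exp_neg_I_mul_mul_div, one_mul]

lemma stronglyMeasurable_Kx (h : ℝ) (X : Set ℝ) : StronglyMeasurable (Kx h X) :=
  stronglyMeasurable_const.mul <| StronglyMeasurable.integral_prod_right
    (f := fun (y x : ℝ) => exp (I * x * y / h)) (by fun_prop)

lemma Kx_neg (h : ℝ) (X : Set ℝ) (y : ℝ) : Kx h X (-y) = conj (Kx h X y) := by
  rw [Kx, Kx, map_mul, conj_ofReal, ← integral_conj]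
  congr 1
  refine integral_congr_ae (.of_forall fun x => ?_)
  simp only [← exp_conj, map_div₀, map_mul, conj_I, conj_ofReal, ofReal_neg]
  ring_nf

lemma norm_Kx_neg (h : ℝ) (X : Set ℝ) (y : ℝ) : ‖Kx h X (-y)‖ = ‖Kx h X y‖ := by
  rw [Kx_neg, RCLike.norm_conj]

lemma semiFT_mul_conj {h : ℝ} (hh : 0 < h) (g : ℝ → ℂ) (ξ : ℝ) :
    semiFT h g ξ * conj (semiFT h g ξ) =
      ∫ p : ℝ × ℝ, (((2 * Real.pi * h)⁻¹ : ℝ) : ℂ) * exp (I * ξ * ((p.2 - p.1 : ℝ) : ℂ) / h) *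
        (g p.1 * conj (g p.2)) := by
  have hc : ((2 * Real.pi * h) ^ (-(1/2) : ℝ)) * ((2 * Real.pi * h) ^ (-(1/2) : ℝ))
      = (2 * Real.pi * h)⁻¹ := by
    rw [← Real.rpow_add (by positivity)]; norm_num [Real.rpow_neg_one]
  rw [semiFT, map_mul, conj_ofReal, ← integral_conj, mul_mul_mul_comm, ← ofReal_mul, hc,
    ← integral_prod_mul, ← integral_const_mul]
  refine integral_congr_ae (.of_forall fun p => ?_)
  simp only [map_mul, ← exp_conj, map_div₀, map_neg, conj_I, conj_ofReal]
  have hE : exp (-(I * p.1 * ξ) / h) * exp (-(-I * p.2 * ξ) / h) =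
      exp (I * ξ * ((p.2 - p.1 : ℝ) : ℂ) / h) := by
    rw [← exp_add]; push_cast; ring_nf
  rw [← hE]; ring

lemma ofReal_setIntegral_norm_semiFT_sq {h : ℝ} (hh : 0 < h) {X : Set ℝ} (hX : volume X ≠ ⊤)
    {g : ℝ → ℂ} (hg : Integrable g) :
    ((∫ ξ in X, ‖semiFT h g ξ‖ ^ 2 : ℝ) : ℂ) =
      ∫ p : ℝ × ℝ, Kx h X (p.2 - p.1) * (g p.1 * conj (g p.2)) := by
  have : IsFiniteMeasure (volume.restrict X) := isFiniteMeasure_restrict.2 hX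
  have hint : Integrable (Function.uncurry fun (ξ : ℝ) (p : ℝ × ℝ) =>
      (((2 * Real.pi * h)⁻¹ : ℝ) : ℂ) * exp (I * ξ * ((p.2 - p.1 : ℝ) : ℂ) / h) *
        (g p.1 * conj (g p.2))) ((volume.restrict X).prod (volume.prod volume)) := by
    have hgg : Integrable (fun q : ℝ × (ℝ × ℝ) => 1 * (g q.2.1 * conj (g q.2.2)))
        ((volume.restrict X).prod (volume.prod volume)) :=
      (integrable_const 1).mul_prod (hg.mul_prod ((conjCLE : ℂ →L[ℝ] ℂ).integrable_comp hg))
    refine (hgg.bdd_mul (c := (2 * Real.pi * h)⁻¹)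
      (f := fun q =>
        (((2 * Real.pi * h)⁻¹ : ℝ) : ℂ) * exp (I * q.1 * ((q.2.2 - q.2.1 : ℝ) : ℂ) / h))
      (Continuous.aestronglyMeasurable (by fun_prop)) (.of_forall fun q => ?_)).congr
      (.of_forall fun q => ?_)
    · rw [norm_mul, norm_exp_I_mul_mul_div, mul_one, norm_real,
        Real.norm_of_nonneg (by positivity)]
    · simp [Function.uncurry]
  rw [← integral_complex_ofReal]
  simp_rw [ofReal_pow, ← mul_conj', semiFT_mul_conj hh]
  rw [Measure.volume_eq_prod, integral_integral_swap hint]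
  simp_rw [Kx, mul_assoc, integral_const_mul, ← integral_mul_const]

lemma setIntegral_norm_semiFT_sq_le {h : ℝ} (hh : 0 < h) {X Y : Set ℝ} (hX : volume X ≠ ⊤)
    (hY : MeasurableSet Y) (hYμ : volume Y ≠ ⊤) {B M : ℝ} (hB : ∀ y, ‖Kx h X y‖ ≤ B)
    (hM : ∀ z ∈ Y, ∫ w in Y, ‖Kx h X (w - z)‖ ≤ M) {g : ℝ → ℂ} (hg : MemLp g 2)
    (hg₁ : Integrable g) (hgY : ∀ x ∉ Y, g x = 0) :
    ∫ ξ in X, ‖semiFT h g ξ‖ ^ 2 ≤ M * ∫ x, ‖g x‖ ^ 2 := by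
  have hcol (y : ℝ) (hy : y ∈ Y) : ∫ x in Y, ‖Kx h X (y - x)‖ ≤ M := by
    simpa only [← neg_sub y, norm_Kx_neg] using hM y hy
  calc ∫ ξ in X, ‖semiFT h g ξ‖ ^ 2 = ‖((∫ ξ in X, ‖semiFT h g ξ‖ ^ 2 : ℝ) : ℂ)‖ := by
        rw [norm_real, Real.norm_of_nonneg (integral_nonneg fun _ => by positivity)]
    _ ≤ M * ∫ x, ‖g x‖ ^ 2 := by
        rw [ofReal_setIntegral_norm_semiFT_sq hh hX hg₁, Measure.volume_eq_prod]
        exact norm_integral_kernel_mul_le (k := fun p => Kx h X (p.2 - p.1))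
          ((stronglyMeasurable_Kx h X).comp_measurable (by fun_prop)).aestronglyMeasurable
          (fun p => hB _) hY hYμ hg hgY hM hcol

lemma eLpNorm_indicator_semiFT_le {h : ℝ} (hh : 0 < h) {X Y : Set ℝ} (hX : MeasurableSet X)
    (hXμ : volume X ≠ ⊤) (hY : MeasurableSet Y) (hYμ : volume Y ≠ ⊤) {B M : ℝ}
    (hB : ∀ y, ‖Kx h X y‖ ≤ B) (hM : ∀ z ∈ Y, ∫ w in Y, ‖Kx h X (w - z)‖ ≤ M) {g : ℝ → ℂ}
    (hg : MemLp g 2) (hgY : ∀ x ∉ Y, g x = 0) :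
    eLpNorm (X.indicator (semiFT h g)) 2 volume ≤ ENNReal.ofReal √M * eLpNorm g 2 volume := by
  have : IsFiniteMeasure (volume.restrict X) := isFiniteMeasure_restrict.2 hXμ
  have : IsFiniteMeasure (volume.restrict Y) := isFiniteMeasure_restrict.2 hYμ
  have hg₁ : Integrable g :=
    IntegrableOn.integrable_of_forall_notMem_eq_zero ((hg.restrict Y).integrable one_le_two) hgY
  have hF : MemLp (semiFT h g) 2 (volume.restrict X) :=
    .of_bound (continuous_semiFT h hg₁).aestronglyMeasurable _
      (.of_forall (norm_semiFT_le hh.le g))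
  rw [eLpNorm_indicator_eq_eLpNorm_restrict hX]
  exact eLpNorm_two_le_of_integral_sq_le hF hg
    (setIntegral_norm_semiFT_sq_le hh hXμ hY hYμ hB hM hg hg₁ hgY)

theorem stmt15_general (C δ βF : ℝ) (hC : 0 < C) (hδ0 : 0 < δ)
    (hβ0 : 0 < βF) (hβδ : βF ≤ δ) :
    ∃ C' : ℝ, 0 < C' ∧
      ∀ h : ℝ, 0 < h → h ≤ 1 →
      ∀ X Y : Set ℝ, MeasurableSet X → MeasurableSet Y →
        X ⊆ Set.Icc 0 1 → Y ⊆ Set.Icc 0 1 →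
        (∀ y : ℝ, h ≤ |y| → |y| ≤ 2 →
          ‖Kx h X y‖ ≤ C * h ^ (βF/2 - δ) * |y| ^ (-(βF/2) : ℝ)) →
        (∀ a b : ℝ, a < b → h ≤ b - a → b - a ≤ 2 →
          (volume (Y ∩ Set.Icc a b)).toReal ≤ C * h ^ (1 - δ) * (b - a) ^ δ) →
        (∀ y : ℝ, ‖Kx h X y‖ ≤ C * h ^ (-δ : ℝ)) →
        ∀ f : ℝ → ℂ, MemLp f 2 volume →
          eLpNorm (X.indicator (semiFT h (Y.indicator f))) 2 volume ≤
            ENNReal.ofReal (C' * h ^ (1/2 - δ + βF/4 : ℝ)) * eLpNorm f 2 volume := by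
  set K := 2 ^ δ + 4 ^ δ * 2 ^ (δ - βF / 2) / (2 ^ (δ - βF / 2) - 1 : ℝ)
  have hK : 0 < K := by
    have : (1 : ℝ) < 2 ^ (δ - βF / 2) := Real.one_lt_rpow one_lt_two (by linarith)
    have : 0 < (2 : ℝ) ^ (δ - βF / 2) - 1 := by linarith
    positivity
  refine ⟨√K * C, by positivity, fun h hh h1 X Y hX hY hXb hYb hdecay hreg hsup f hf => ?_⟩
  have hM (z : ℝ) (hz : z ∈ Y) := setIntegral_norm_comp_sub_le hC.le hδ0 hβ0.le (by linarith) hh h1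
    (stronglyMeasurable_Kx h X) hY hYb hreg hdecay hsup (hYb hz)
  have hsqrt : √(K * C ^ 2 * h ^ (1 - 2 * δ + βF / 2)) = √K * C * h ^ (1 / 2 - δ + βF / 4) := by
    rw [Real.sqrt_mul (by positivity), Real.sqrt_mul hK.le, Real.sqrt_sq hC.le,
      Real.sqrt_eq_rpow (h ^ _), ← Real.rpow_mul hh.le]
    ring_nf
  calc eLpNorm (X.indicator (semiFT h (Y.indicator f))) 2 volume
      ≤ ENNReal.ofReal √(K * C ^ 2 * h ^ (1 - 2 * δ + βF / 2)) * eLpNorm (Y.indicator f) 2 volume :=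
        eLpNorm_indicator_semiFT_le hh hX ((measure_mono hXb).trans_lt measure_Icc_lt_top).ne hY
          ((measure_mono hYb).trans_lt measure_Icc_lt_top).ne hsup hM (hf.indicator hY)
          fun x hx => indicator_of_notMem hx f
    _ ≤ ENNReal.ofReal (√K * C * h ^ (1 / 2 - δ + βF / 4)) * eLpNorm f 2 volume := by
        rw [hsqrt]
        gcongr
        exact eLpNorm_indicator_le f

/-- FUP from Fourier decay: if `X` satisfies the Fourier decay bound
`|K_X(y)| ≤ C h^{β_F/2−δ}|y|^{−β_F/2}` for `h ≤ |y| ≤ 2`, `Y` satisfies the regularity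
volume bound, and `sup|K_X| ≤ C h^{−δ}`, then
`‖1_X F_h 1_Y‖ ≤ C' h^{1/2 − δ + β_F/4}` with `C'` depending only on `C, δ, β_F`. -/
theorem stmt15 (C δ βF : ℝ) (hC : 0 < C) (hδ0 : 0 < δ) (hδ1 : δ < 1)
    (hβ0 : 0 < βF) (hβδ : βF ≤ δ) :
    ∃ C' : ℝ, 0 < C' ∧
      ∀ h : ℝ, 0 < h → h ≤ 1 →
      ∀ X Y : Set ℝ, MeasurableSet X → MeasurableSet Y →
        X ⊆ Set.Icc 0 1 → Y ⊆ Set.Icc 0 1 →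
        (∀ y : ℝ, h ≤ |y| → |y| ≤ 2 →
          ‖Kx h X y‖ ≤ C * h ^ (βF/2 - δ) * |y| ^ (-(βF/2) : ℝ)) →
        (∀ a b : ℝ, a < b → h ≤ b - a → b - a ≤ 2 →
          (volume (Y ∩ Set.Icc a b)).toReal ≤ C * h ^ (1 - δ) * (b - a) ^ δ) →
        (∀ y : ℝ, ‖Kx h X y‖ ≤ C * h ^ (-δ : ℝ)) →
        ∀ f : ℝ → ℂ, MemLp f 2 volume →
          eLpNorm (X.indicator (semiFT h (Y.indicator f))) 2 volume ≤
            ENNReal.ofReal (C' * h ^ (1/2 - δ + βF/4 : ℝ)) * eLpNorm f 2 volume :=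
  stmt15_general C δ βF hC hδ0 hβ0 hβδ
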